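/- Let u be a finite-dimensional real unimodular Lie algebra with inner product, decomposed orthogonally as u = k ⊕ m, and let X, Y ∈ m satisfy [k,X] = [k,Y] = 0. Then Ric(X,Y) := −(1/2)Σ_{i,j}⟨[X,X_i]_m,X_j⟩⟨[Y,X_i]_m,X_j⟩ + (1/4)Σ_{i,j}⟨[X_i,X_j]_m,X⟩⟨[X_i,X_j]_m,Y⟩ − (1/2)B(X,Y) equals (1/4)Σ_{i,j}⟨[X_i,X_j]_m,X⟩⟨[X_i,X_j]_m,Y⟩ − tr(S(ad_m X)S(ad_m Y)), where {X_i} is an orthonormal basis of m, B is the Killing form of u, [·,·]_m is the bracket projected to m, and S(A) = (A+Aᵗ)/2. -/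

import Mathlib

open scoped InnerProductSpace
open Module

variable {u : Type*} [NormedAddCommGroup u] [InnerProductSpace ℝ u] [FiniteDimensional ℝ u]

/-- The symmetric part `S(A) = (A + Aᵗ)/2`. -/
noncomputable def symmPart {E : Type*} [NormedAddCommGroup E] [InnerProductSpace ℝ E]
    [FiniteDimensional ℝ E] (A : E →ₗ[ℝ] E) : E →ₗ[ℝ] E :=
  ((1 : ℝ) / 2) • (A + LinearMap.adjoint A)

/-- `ad_m Y`: the bracket with `Y` followed by orthogonal projection onto `m`. -/
noncomputable def adm (lie : u →ₗ[ℝ] u →ₗ[ℝ] u) (m : Submodule ℝ u) (Y : u) :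
    ↥m →ₗ[ℝ] ↥m :=
  (Submodule.orthogonalProjectionOnto m).toLinearMap ∘ₗ (lie Y) ∘ₗ m.subtype

/-!
Since `X` and `Y` commute with `k = mᗮ`, `ad X` and `ad Y` kill `k`, so the Killing form
`tr (ad X ∘ ad Y)` only sees the compressions `A = ad_m X`, `B = ad_m Y` and equals `tr (A B)`.
The first double sum is `tr (Aᵗ B)`, and expanding the symmetric parts with
`tr (Aᵗ Bᵗ) = tr (A B)`, `tr (A Bᵗ) = tr (Aᵗ B)` gives `tr (S(A) S(B)) = (tr (A B) + tr (Aᵗ B)) / 2`.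
-/

open LinearMap

theorem adm_apply (lie : u →ₗ[ℝ] u →ₗ[ℝ] u) (m : Submodule ℝ u) (Y : u) (v : m) :
    adm lie m Y v = m.orthogonalProjectionOnto (lie Y v) :=
  rfl

section TraceIdentities

variable {E : Type*} [NormedAddCommGroup E] [InnerProductSpace ℝ E]

theorem LinearMap.trace_adjoint [FiniteDimensional ℝ E] (T : E →ₗ[ℝ] E) :
    trace ℝ E (adjoint T) = trace ℝ E T := by
  simp only [trace_eq_sum_inner _ (stdOrthonormalBasis ℝ E), adjoint_inner_right, real_inner_comm]

theorem OrthonormalBasis.sum_inner_mul_inner_eq_trace_adjoint_comp {ι : Type*} [Fintype ι]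
    [FiniteDimensional ℝ E] (b : OrthonormalBasis ι ℝ E) (A B : E →ₗ[ℝ] E) :
    ∑ i, ∑ j, ⟪A (b i), b j⟫_ℝ * ⟪B (b i), b j⟫_ℝ = trace ℝ E (adjoint A ∘ₗ B) := by
  rw [trace_eq_sum_inner _ b]
  refine Fintype.sum_congr _ _ fun i => ?_
  rw [comp_apply, adjoint_inner_right, ← b.sum_inner_mul_inner]
  simp only [real_inner_comm (b _) (B (b i))]

theorem trace_symmPart_comp_symmPart [FiniteDimensional ℝ E] (A B : E →ₗ[ℝ] E) :
    trace ℝ E (symmPart A ∘ₗ symmPart B)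
      = (1 / 2 : ℝ) * trace ℝ E (A ∘ₗ B) + (1 / 2 : ℝ) * trace ℝ E (adjoint A ∘ₗ B) := by
  have h_adj_adj : trace ℝ E (adjoint A ∘ₗ adjoint B) = trace ℝ E (A ∘ₗ B) := by
    rw [← adjoint_comp, trace_adjoint, trace_comp_comm']
  have h_adj_right : trace ℝ E (A ∘ₗ adjoint B) = trace ℝ E (adjoint A ∘ₗ B) := by
    rw [← adjoint_adjoint A, ← adjoint_comp, trace_adjoint, trace_comp_comm', adjoint_adjoint]
  simp only [symmPart, comp_smul, smul_comp, add_comp, comp_add, map_smul, map_add,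
    h_adj_adj, h_adj_right, smul_eq_mul]
  ring

end TraceIdentities

section Compression

variable {𝕜 E : Type*} [RCLike 𝕜] [NormedAddCommGroup E] [InnerProductSpace 𝕜 E]
  (m : Submodule 𝕜 E)

theorem LinearMap.comp_subtype_comp_orthogonalProjectionOnto [m.HasOrthogonalProjection]
    {F : Type*} [AddCommGroup F] [Module 𝕜 F] {f : E →ₗ[𝕜] F} (hf : mᗮ ≤ ker f) :
    f ∘ₗ m.subtype ∘ₗ (m.orthogonalProjectionOnto : E →ₗ[𝕜] m) = f := by
  ext v
  have h := hf (m.sub_starProjection_mem_orthogonal v)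
  rw [mem_ker, map_sub, sub_eq_zero] at h
  exact h.symm

theorem LinearMap.trace_comp_eq_trace_compression_comp [FiniteDimensional 𝕜 E]
    {f g : E →ₗ[𝕜] E} (hf : mᗮ ≤ ker f) (hg : mᗮ ≤ ker g) :
    trace 𝕜 E (f ∘ₗ g)
      = trace 𝕜 m (((m.orthogonalProjectionOnto : E →ₗ[𝕜] m) ∘ₗ f ∘ₗ m.subtype) ∘ₗ
          ((m.orthogonalProjectionOnto : E →ₗ[𝕜] m) ∘ₗ g ∘ₗ m.subtype)) := by
  conv_lhs =>
    rw [← comp_subtype_comp_orthogonalProjectionOnto m hf,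
      ← comp_subtype_comp_orthogonalProjectionOnto m hg]
  simpa only [comp_assoc] using trace_comp_comm' (m.orthogonalProjectionOnto : E →ₗ[𝕜] m)
    (f ∘ₗ m.subtype ∘ₗ (m.orthogonalProjectionOnto : E →ₗ[𝕜] m) ∘ₗ g ∘ₗ m.subtype)

end Compression

theorem ricci_formula_unimodular_general
    (lie : u →ₗ[ℝ] u →ₗ[ℝ] u)
    (hanti : ∀ X : u, lie X X = 0)
    (m : Submodule ℝ u) {ι : Type*} [Fintype ι] (b : OrthonormalBasis ι ℝ ↥m)
    (X Y : ↥m)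
    (hkX : ∀ Z ∈ mᗮ, lie Z (X : u) = 0)
    (hkY : ∀ Z ∈ mᗮ, lie Z (Y : u) = 0) :
    -(1 / 2 : ℝ) * (∑ i, ∑ j,
        ⟪Submodule.orthogonalProjectionOnto m (lie (X : u) (b i : u)), b j⟫_ℝ *
          ⟪Submodule.orthogonalProjectionOnto m (lie (Y : u) (b i : u)), b j⟫_ℝ)
      + (1 / 4 : ℝ) * (∑ i, ∑ j,
        ⟪Submodule.orthogonalProjectionOnto m (lie (b i : u) (b j : u)), X⟫_ℝ *
          ⟪Submodule.orthogonalProjectionOnto m (lie (b i : u) (b j : u)), Y⟫_ℝ)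
      - (1 / 2 : ℝ) * LinearMap.trace ℝ u (lie (X : u) ∘ₗ lie (Y : u))
    = (1 / 4 : ℝ) * (∑ i, ∑ j,
        ⟪Submodule.orthogonalProjectionOnto m (lie (b i : u) (b j : u)), X⟫_ℝ *
          ⟪Submodule.orthogonalProjectionOnto m (lie (b i : u) (b j : u)), Y⟫_ℝ)
      - LinearMap.trace ℝ ↥m (symmPart (adm lie m (X : u)) ∘ₗ symmPart (adm lie m (Y : u))) := by
  have hk_le_ker : ∀ W : u, (∀ Z ∈ mᗮ, lie Z W = 0) → mᗮ ≤ ker (lie W) := by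
    intro W hW Z hZ
    rw [mem_ker, ← LinearMap.IsAlt.neg hanti Z W, hW Z hZ, neg_zero]
  have h_killing : trace ℝ u (lie (X : u) ∘ₗ lie (Y : u))
      = trace ℝ m (adm lie m (X : u) ∘ₗ adm lie m (Y : u)) :=
    trace_comp_eq_trace_compression_comp m (hk_le_ker _ hkX) (hk_le_ker _ hkY)
  have h_sum := b.sum_inner_mul_inner_eq_trace_adjoint_comp (adm lie m X) (adm lie m Y)
  simp only [adm_apply] at h_sum
  rw [h_sum, h_killing, trace_symmPart_comp_symmPart]
  ring

/-- Lemma 2.9 of the paper: for a unimodular Lie algebra `u` with inner product and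
orthogonal decomposition `u = k ⊕ m` (`k = mᗮ`), if `X, Y ∈ m` satisfy `[k,X] = [k,Y] = 0`,
then the Ricci expression (with the Killing form `B(X,Y) = tr(ad X ∘ ad Y)`) equals
`(1/4) Σ ⟨[Xᵢ,Xⱼ]_m,X⟩⟨[Xᵢ,Xⱼ]_m,Y⟩ − tr (S(ad_m X) S(ad_m Y))`. -/
theorem ricci_formula_unimodular
    (lie : u →ₗ[ℝ] u →ₗ[ℝ] u)
    (hanti : ∀ X : u, lie X X = 0)
    (hjacobi : ∀ X Y Z : u, lie X (lie Y Z) = lie (lie X Y) Z + lie Y (lie X Z))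
    (hunimod : ∀ X : u, LinearMap.trace ℝ u (lie X) = 0)
    (m : Submodule ℝ u) {ι : Type*} [Fintype ι] (b : OrthonormalBasis ι ℝ ↥m)
    (X Y : ↥m)
    (hkX : ∀ Z ∈ mᗮ, lie Z (X : u) = 0)
    (hkY : ∀ Z ∈ mᗮ, lie Z (Y : u) = 0) :
    -(1 / 2 : ℝ) * (∑ i, ∑ j,
        ⟪Submodule.orthogonalProjectionOnto m (lie (X : u) (b i : u)), b j⟫_ℝ *
          ⟪Submodule.orthogonalProjectionOnto m (lie (Y : u) (b i : u)), b j⟫_ℝ)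
      + (1 / 4 : ℝ) * (∑ i, ∑ j,
        ⟪Submodule.orthogonalProjectionOnto m (lie (b i : u) (b j : u)), X⟫_ℝ *
          ⟪Submodule.orthogonalProjectionOnto m (lie (b i : u) (b j : u)), Y⟫_ℝ)
      - (1 / 2 : ℝ) * LinearMap.trace ℝ u (lie (X : u) ∘ₗ lie (Y : u))
    = (1 / 4 : ℝ) * (∑ i, ∑ j,
        ⟪Submodule.orthogonalProjectionOnto m (lie (b i : u) (b j : u)), X⟫_ℝ *
          ⟪Submodule.orthogonalProjectionOnto m (lie (b i : u) (b j : u)), Y⟫_ℝ)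
      - LinearMap.trace ℝ ↥m (symmPart (adm lie m (X : u)) ∘ₗ symmPart (adm lie m (Y : u))) :=
  ricci_formula_unimodular_general lie hanti m b X Y hkX hkY
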